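/- With c⟨l|k⟩ as the coefficient of u_1^{k_1}⋯u_r^{k_r} in u_1⋯u_r P_l(u_1,…,u_r): if l_1 is even, then for all k ∈ ℕ₀^r, c⟨l_1, 1, l_3,…,l_r | k_1,…,k_r⟩ = δ_{l_1,k_1} · ( c⟨1, l_3,…,l_r | k_2,…,k_r⟩ − δ_{l_3,k_2} ⋯ δ_{l_r,k_{r-1}} δ_{1,k_r} ). -/

import Mathlib

open Finset

/-- `Ssum K r u i = u_i + u_{i+1} + ⋯ + u_r` (1-based indexing). -/
noncomputable def Ssum (K : Type*) [Field K] (r : ℕ) (u : ℕ → K) (i : ℕ) : K :=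
  ∑ j ∈ Finset.Icc i r, u j

/-- The rational function
`P_l(u_1,…,u_r) = ∑_{i=0}^{r} u_1^{l_1−1}⋯u_{i−1}^{l_{i−1}−1}(u_i+⋯+u_r)^{l_i−1}
(−u_{i+1}−⋯−u_r)^{l_{i+1}−1} u_{i+1}^{l_{i+2}−1}⋯u_{r-1}^{l_r−1}`. -/
noncomputable def Pfun (K : Type*) [Field K] (r : ℕ) (l : ℕ → ℕ) (u : ℕ → K) : K :=
  (-(Ssum K r u 1)) ^ ((l 1 : ℤ) - 1) *
      ∏ j ∈ Finset.Icc 1 (r - 1), u j ^ ((l (j + 1) : ℤ) - 1)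
    + (∑ i ∈ Finset.Icc 1 (r - 1),
        (∏ j ∈ Finset.Icc 1 (i - 1), u j ^ ((l j : ℤ) - 1))
          * (Ssum K r u i) ^ ((l i : ℤ) - 1)
          * (-(Ssum K r u (i + 1))) ^ ((l (i + 1) : ℤ) - 1)
          * ∏ j ∈ Finset.Icc (i + 1) (r - 1), u j ^ ((l (j + 1) : ℤ) - 1))
    + (∏ j ∈ Finset.Icc 1 (r - 1), u j ^ ((l j : ℤ) - 1)) * u r ^ ((l r : ℤ) - 1)

/-- The field of rational functions `ℚ(u_1, u_2, …)`. -/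
abbrev K₀ : Type _ := FractionRing (MvPolynomial ℕ ℚ)

/-- The indeterminate `u_j` viewed inside `ℚ(u_1, u_2, …)`. -/
noncomputable def uvar (j : ℕ) : K₀ :=
  algebraMap (MvPolynomial ℕ ℚ) K₀ (MvPolynomial.X j)

/-- The canonical map `ℤ[u_1, u_2, …] → ℚ(u_1, u_2, …)`. -/
noncomputable def intPolyMap : MvPolynomial ℕ ℤ → K₀ :=
  fun p => algebraMap (MvPolynomial ℕ ℚ) K₀ (MvPolynomial.map (Int.castRingHom ℚ) p)

section Aux

open MvPolynomial Function

/- ### Reindexing lemmas -/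

lemma sum_Icc_shift {M : Type*} [AddCommMonoid M] (f : ℕ → M) {a b c d : ℕ}
    (h1 : c = a + 1) (h2 : d = b + 1) :
    ∑ j ∈ Icc c d, f j = ∑ j ∈ Icc a b, f (j + 1) := by
  subst h1 h2
  rw [← Finset.map_add_right_Icc a b 1, Finset.sum_map]
  rfl

lemma prod_Icc_shift {M : Type*} [CommMonoid M] (f : ℕ → M) {a b c d : ℕ}
    (h1 : c = a + 1) (h2 : d = b + 1) :
    ∏ j ∈ Icc c d, f j = ∏ j ∈ Icc a b, f (j + 1) := by
  subst h1 h2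
  rw [← Finset.map_add_right_Icc a b 1, Finset.prod_map]
  rfl

lemma Ssum_succ {K : Type*} [Field K] (r : ℕ) (hr : 1 ≤ r) (u : ℕ → K) (i : ℕ) :
    Ssum K (r - 1) (fun j => u (j + 1)) i = Ssum K r u (i + 1) := by
  unfold Ssum
  rw [sum_Icc_shift u rfl (by omega : r = (r - 1) + 1)]

/- ### The key algebraic identity -/

lemma Pfun_shift {K : Type*} [Field K] (r : ℕ) (hr : 2 ≤ r) (l : ℕ → ℕ)
    (hl1 : Even (l 1)) (hl2 : l 2 = 1) (u : ℕ → K) :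
    Pfun K r l u = u 1 ^ ((l 1 : ℤ) - 1) *
      (Pfun K (r - 1) (fun j => l (j + 1)) (fun j => u (j + 1))
        - ∏ j ∈ Icc 1 (r - 1 - 1), u (j + 1) ^ ((l (j + 1 + 1) : ℤ) - 1)) := by
  have hr1 : r - 1 + 1 = r := by omega
  have hodd : Odd ((l 1 : ℤ) - 1) := by
    obtain ⟨m, hm⟩ := hl1
    exact ⟨(m : ℤ) - 1, by push_cast [hm]; ring⟩
  have hsplit : Finset.Icc 1 (r - 1) = insert 1 (Finset.Icc 2 (r - 1)) := by
    ext x; simp only [Finset.mem_Icc, Finset.mem_insert]; omega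
  have h1not : (1 : ℕ) ∉ Finset.Icc 2 (r - 1) := by simp
  have hIcc10 : Finset.Icc 1 0 = (∅ : Finset ℕ) := by
    apply Finset.Icc_eq_empty; omega
  simp only [Pfun, hsplit, Finset.sum_insert h1not, Finset.prod_insert h1not, hr1,
    Nat.add_sub_cancel, hIcc10, Finset.prod_empty, show (1:ℕ)+1 = 2 from rfl, hl2,
    Nat.cast_one, sub_self, zpow_zero, one_mul, mul_one]
  rw [hodd.neg_zpow]
  rw [sum_Icc_shift (fun x => (∏ j ∈ Finset.Icc 1 (x - 1), u j ^ ((l j : ℤ) - 1))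
        * Ssum K r u x ^ ((l x : ℤ) - 1)
        * (-Ssum K r u (x + 1)) ^ ((l (x + 1) : ℤ) - 1)
        * ∏ y ∈ Finset.Icc (x + 1) (r - 1), u y ^ ((l (y + 1) : ℤ) - 1))
      (show (2:ℕ) = 1 + 1 by norm_num) (show r - 1 = (r - 1 - 1) + 1 by omega)]
  have hterm : ∀ i ∈ Finset.Icc 1 (r - 1 - 1),
      (∏ j ∈ Finset.Icc 1 (i + 1 - 1), u j ^ ((l j : ℤ) - 1))
        * Ssum K r u (i + 1) ^ ((l (i + 1) : ℤ) - 1)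
        * (-Ssum K r u (i + 1 + 1)) ^ ((l (i + 1 + 1) : ℤ) - 1)
        * ∏ y ∈ Finset.Icc (i + 1 + 1) (r - 1), u y ^ ((l (y + 1) : ℤ) - 1)
      = u 1 ^ ((l 1 : ℤ) - 1) *
        ((∏ x ∈ Finset.Icc 1 (i - 1), u (x + 1) ^ ((l (x + 1) : ℤ) - 1))
          * Ssum K (r - 1) (fun j => u (j + 1)) i ^ ((l (i + 1) : ℤ) - 1)
          * (-Ssum K (r - 1) (fun j => u (j + 1)) (i + 1)) ^ ((l (i + 1 + 1) : ℤ) - 1)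
          * ∏ x ∈ Finset.Icc (i + 1) (r - 1 - 1), u (x + 1) ^ ((l (x + 1 + 1) : ℤ) - 1)) := by
    intro i hi
    simp only [Finset.mem_Icc] at hi
    rw [Ssum_succ r (by omega) u i, Ssum_succ r (by omega) u (i + 1)]
    rw [show (∏ x ∈ Finset.Icc 1 (i - 1), u (x + 1) ^ ((l (x + 1) : ℤ) - 1))
        = ∏ j ∈ Finset.Icc 2 i, u j ^ ((l j : ℤ) - 1) from
      (prod_Icc_shift (fun j => u j ^ ((l j : ℤ) - 1)) (by norm_num) (by omega)).symm]
    rw [show (∏ x ∈ Finset.Icc (i + 1) (r - 1 - 1), u (x + 1) ^ ((l (x + 1 + 1) : ℤ) - 1))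
        = ∏ y ∈ Finset.Icc (i + 1 + 1) (r - 1), u y ^ ((l (y + 1) : ℤ) - 1) from
      (prod_Icc_shift (fun y => u y ^ ((l (y + 1) : ℤ) - 1)) rfl (by omega)).symm]
    rw [Nat.add_sub_cancel]
    rw [show Finset.Icc 1 i = insert 1 (Finset.Icc 2 i) from by
        ext x; simp only [Finset.mem_Icc, Finset.mem_insert]; omega,
      Finset.prod_insert (by simp)]
    ring
  rw [Finset.sum_congr rfl hterm, ← Finset.mul_sum]
  rw [show (∏ x ∈ Finset.Icc 1 (r - 1 - 1), u (x + 1) ^ ((l (x + 1) : ℤ) - 1))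
      = ∏ j ∈ Finset.Icc 2 (r - 1), u j ^ ((l j : ℤ) - 1) from
    (prod_Icc_shift (fun j => u j ^ ((l j : ℤ) - 1)) (by norm_num) (by omega)).symm]
  ring

lemma mul_zpow_pred {K : Type*} [Field K] (x : K) (hx : x ≠ 0) (c : ℕ) :
    x * x ^ ((c : ℤ) - 1) = x ^ c := by
  rw [← zpow_natCast x c, show (c : ℤ) = (c : ℤ) - 1 + 1 by ring, zpow_add_one₀ hx,
    mul_comm]
  rw [show (c : ℤ) - 1 + 1 - 1 = (c : ℤ) - 1 by ring]

lemma key_mul {K : Type*} [Field K] (r : ℕ) (hr : 2 ≤ r) (l : ℕ → ℕ)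
    (hl1 : Even (l 1)) (hl2 : l 2 = 1) (u : ℕ → K) (hu : ∀ j, u j ≠ 0) :
    (∏ j ∈ Icc 1 r, u j) * Pfun K r l u
      = u 1 ^ (l 1) *
        ((∏ j ∈ Icc 1 (r - 1), u (j + 1))
            * Pfun K (r - 1) (fun j => l (j + 1)) (fun j => u (j + 1))
          - (∏ j ∈ Icc 2 (r - 1), u j ^ (l (j + 1))) * u r) := by
  rw [Pfun_shift r hr l hl1 hl2 u]
  have h1 : ∏ j ∈ Icc 1 r, u j = u 1 * ∏ j ∈ Icc 1 (r - 1), u (j + 1) := by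
    rw [← prod_Icc_shift u (show (2:ℕ) = 1 + 1 by norm_num) (show r = (r - 1) + 1 by omega)]
    rw [show Finset.Icc 1 r = insert 1 (Finset.Icc 2 r) from by
      ext x; simp only [Finset.mem_Icc, Finset.mem_insert]; omega]
    rw [Finset.prod_insert (by simp)]
  have hpow := mul_zpow_pred (u 1) (hu 1) (l 1)
  have hmon : (∏ j ∈ Icc 1 (r - 1), u (j + 1))
      * (∏ j ∈ Icc 1 (r - 1 - 1), u (j + 1) ^ ((l (j + 1 + 1) : ℤ) - 1))
      = (∏ j ∈ Icc 2 (r - 1), u j ^ (l (j + 1))) * u r := by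
    rw [← prod_Icc_shift u (show (2:ℕ) = 1 + 1 by norm_num) (show r = (r - 1) + 1 by omega)]
    rw [← prod_Icc_shift (fun j => u j ^ ((l (j + 1) : ℤ) - 1)) (show (2:ℕ) = 1 + 1 by norm_num)
      (show r - 1 = (r - 1 - 1) + 1 by omega)]
    rw [show Finset.Icc 2 r = insert r (Finset.Icc 2 (r - 1)) from by
      ext x; simp only [Finset.mem_Icc, Finset.mem_insert]; omega]
    rw [Finset.prod_insert (by simp; omega)]
    rw [show (u r * ∏ x ∈ Icc 2 (r - 1), u x) * ∏ j ∈ Icc 2 (r - 1), u j ^ ((l (j + 1) : ℤ) - 1)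
        = ((∏ x ∈ Icc 2 (r - 1), u x) * ∏ j ∈ Icc 2 (r - 1), u j ^ ((l (j + 1) : ℤ) - 1)) * u r
        from by ring,
      ← Finset.prod_mul_distrib,
      Finset.prod_congr rfl (fun j _ => mul_zpow_pred (u j) (hu j) (l (j + 1)))]
  rw [h1]
  calc u 1 * (∏ j ∈ Icc 1 (r - 1), u (j + 1)) *
        (u 1 ^ ((l 1 : ℤ) - 1) *
          (Pfun K (r - 1) (fun j => l (j + 1)) (fun j => u (j + 1))
            - ∏ j ∈ Icc 1 (r - 1 - 1), u (j + 1) ^ ((l (j + 1 + 1) : ℤ) - 1)))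
      = (u 1 * u 1 ^ ((l 1 : ℤ) - 1)) *
        ((∏ j ∈ Icc 1 (r - 1), u (j + 1))
            * Pfun K (r - 1) (fun j => l (j + 1)) (fun j => u (j + 1))
          - (∏ j ∈ Icc 1 (r - 1), u (j + 1))
            * ∏ j ∈ Icc 1 (r - 1 - 1), u (j + 1) ^ ((l (j + 1 + 1) : ℤ) - 1)) := by ring
    _ = _ := by rw [hpow, hmon]

/- ### Congruence for `Pfun` -/

lemma Pfun_congr {K : Type*} [Field K] (r : ℕ) (hr : 1 ≤ r) (l : ℕ → ℕ) (u v : ℕ → K)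
    (h : ∀ j, 1 ≤ j → j ≤ r → u j = v j) : Pfun K r l u = Pfun K r l v := by
  have hS : ∀ i, 1 ≤ i → Ssum K r u i = Ssum K r v i := fun i hi =>
    Finset.sum_congr rfl fun j hj => by
      simp only [Finset.mem_Icc] at hj; exact h j (by omega) (by omega)
  unfold Pfun
  rw [hS 1 le_rfl, h r hr le_rfl]
  congr 1
  · congr 1
    · congr 1
      exact Finset.prod_congr rfl fun j hj => by
        simp only [Finset.mem_Icc] at hj; rw [h j (by omega) (by omega)]
    · refine Finset.sum_congr rfl fun i hi => ?_
      simp only [Finset.mem_Icc] at hi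
      rw [hS i (by omega), hS (i + 1) (by omega)]
      congr 1
      · congr 2
        exact Finset.prod_congr rfl fun j hj => by
          simp only [Finset.mem_Icc] at hj; rw [h j (by omega) (by omega)]
      · exact Finset.prod_congr rfl fun j hj => by
          simp only [Finset.mem_Icc] at hj; rw [h j (by omega) (by omega)]
  · congr 1
    exact Finset.prod_congr rfl fun j hj => by
      simp only [Finset.mem_Icc] at hj; rw [h j (by omega) (by omega)]

lemma map_Pfun {K L : Type*} [Field K] [Field L] (f : K →+* L) (r : ℕ) (l : ℕ → ℕ) (u : ℕ → K) :
    f (Pfun K r l u) = Pfun L r l (fun j => f (u j)) := by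
  simp only [Pfun, Ssum, map_add, map_mul, map_sum, map_prod, map_zpow₀, map_neg]

/- ### The field `K₀` and the maps into it -/

abbrev A₀ : Type _ := MvPolynomial ℕ ℚ

noncomputable def ipm : MvPolynomial ℕ ℤ →+* K₀ :=
  (algebraMap A₀ K₀).comp (MvPolynomial.map (Int.castRingHom ℚ))

lemma intPolyMap_eq (p : MvPolynomial ℕ ℤ) : intPolyMap p = ipm p := rfl

lemma ipm_inj : Injective ipm :=
  (IsFractionRing.injective A₀ K₀).comp
    (MvPolynomial.map_injective _ Int.cast_injective)

lemma ipm_X (j : ℕ) : ipm (X j) = uvar j := by simp [ipm, uvar]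

lemma uvar_ne_zero (j : ℕ) : uvar j ≠ 0 := by
  simp only [uvar, ne_eq, map_eq_zero_iff _ (IsFractionRing.injective A₀ K₀)]
  exact X_ne_zero j

noncomputable def σh : K₀ →+* K₀ :=
  IsFractionRing.lift (g := (algebraMap A₀ K₀).comp (rename Nat.succ : A₀ →ₐ[ℚ] A₀).toRingHom)
    ((IsFractionRing.injective A₀ K₀).comp (rename_injective _ Nat.succ_injective))

lemma σh_alg (x : A₀) : σh (algebraMap A₀ K₀ x) = algebraMap A₀ K₀ (rename Nat.succ x) :=
  IsFractionRing.lift_algebraMap _ _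

lemma σh_uvar (j : ℕ) : σh (uvar j) = uvar (j + 1) := by
  simp [uvar, σh_alg, rename_X]

lemma σh_ipm (p : MvPolynomial ℕ ℤ) : σh (ipm p) = ipm (rename Nat.succ p) := by
  simp [ipm, σh_alg, map_rename]

noncomputable def scQ : A₀ →ₐ[ℚ] A₀ :=
  aeval (fun n => if n = 0 then C 2 * X 0 else X n)

lemma scQ_leftinv (p : A₀) :
    (aeval (fun n => if n = 0 then C (1/2 : ℚ) * X 0 else X n) : A₀ →ₐ[ℚ] A₀) (scQ p) = p := by
  have h : ((aeval (fun n => if n = 0 then C (1/2 : ℚ) * X 0 else X n) : A₀ →ₐ[ℚ] A₀).comp scQ)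
      = AlgHom.id ℚ A₀ := by
    apply MvPolynomial.algHom_ext
    intro n
    by_cases h : n = 0 <;> simp [scQ, h]
    rw [← mul_assoc, ← C_mul]
    norm_num
  calc _ = ((aeval (fun n => if n = 0 then C (1/2 : ℚ) * X 0 else X n) : A₀ →ₐ[ℚ] A₀).comp scQ) p :=
        rfl
    _ = p := by rw [h]; rfl

lemma scQ_inj : Injective scQ := Function.LeftInverse.injective scQ_leftinv

noncomputable def τh : K₀ →+* K₀ :=
  IsFractionRing.lift (g := (algebraMap A₀ K₀).comp scQ.toRingHom)
    ((IsFractionRing.injective A₀ K₀).comp scQ_inj)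

lemma τh_alg (x : A₀) : τh (algebraMap A₀ K₀ x) = algebraMap A₀ K₀ (scQ x) :=
  IsFractionRing.lift_algebraMap _ _

lemma τh_uvar (j : ℕ) (hj : j ≠ 0) : τh (uvar j) = uvar j := by
  simp [uvar, τh_alg, scQ, hj]

lemma coeff_scQ (p : A₀) (w : ℕ →₀ ℕ) :
    coeff w (scQ p) = 2 ^ (w 0) * coeff w p := by
  induction p using MvPolynomial.induction_on' with
  | monomial u a =>
    have key : scQ (monomial u a) = C ((2:ℚ) ^ (u 0)) * monomial u a := by
      rw [scQ, aeval_monomial]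
      have h1 : (u.prod fun n e => (if n = 0 then C (2:ℚ) * X 0 else X n) ^ e)
          = C ((2:ℚ) ^ (u 0)) * u.prod fun n e => (X n : A₀) ^ e := by
        rw [Finsupp.prod, Finsupp.prod]
        have h2 : ∀ n ∈ u.support, ((if n = 0 then C (2:ℚ) * X 0 else X n) ^ u n : A₀)
            = C (if n = 0 then (2:ℚ) ^ u n else 1) * X n ^ u n := by
          intro n _
          by_cases h : n = 0
          · subst h; rw [if_pos rfl, if_pos rfl, mul_pow, ← C_pow]
          · rw [if_neg h, if_neg h, map_one, one_mul]
        rw [Finset.prod_congr rfl h2, Finset.prod_mul_distrib, ← map_prod]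
        congr 2
        rw [Finset.prod_ite_eq' u.support 0 (fun n => (2:ℚ) ^ u n)]
        by_cases h : 0 ∈ u.support
        · rw [if_pos h]
        · rw [if_neg h]
          simp only [Finsupp.mem_support_iff, not_not] at h
          rw [h]; norm_num
      rw [h1, monomial_eq, algebraMap_eq]
      ring
    rw [key, coeff_C_mul, coeff_monomial]
    by_cases h : u = w
    · subst h; simp
    · simp [h]
  | add p q hp hq => simp [map_add, coeff_add, hp, hq]; ring

/- ### Monomial bookkeeping -/

lemma prod_X_pow (s : Finset ℕ) (e : ℕ → ℕ) :
    (∏ j ∈ s, (X j : MvPolynomial ℕ ℤ) ^ e j)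
      = monomial (∑ j ∈ s, Finsupp.single j (e j)) 1 := by
  classical
  induction s using Finset.induction_on with
  | empty => simp
  | insert _ _ hns ih =>
    rw [Finset.prod_insert hns, Finset.sum_insert hns, ih, X_pow_eq_monomial, monomial_mul,
      one_mul]

lemma sum_single_apply (s : Finset ℕ) (g : ℕ → ℕ) (i : ℕ) :
    (∑ j ∈ s, Finsupp.single j (g j)) i = if i ∈ s then g i else 0 := by
  classical
  rw [Finsupp.finset_sum_apply]
  simp only [Finsupp.single_apply]
  exact Finset.sum_ite_eq' s i g

end Aux

open scoped Classical in
/-- With `c⟨l|k⟩` the coefficient of `u_1^{k_1}⋯u_r^{k_r}` in `u_1⋯u_r P_l(u_1,…,u_r)`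
(represented by `p`, resp. `q` for `P_{1,l_3,…,l_r}` in length `r−1`): if `l_1` is even then
`c⟨l_1,1,l_3,…,l_r | k_1,…,k_r⟩
= δ_{l_1,k_1}(c⟨1,l_3,…,l_r | k_2,…,k_r⟩ − δ_{l_3,k_2}⋯δ_{l_r,k_{r-1}}δ_{1,k_r})`.
Here the index `(l_1,1,l_3,…,l_r)` is encoded by `l` with `l 2 = 1`. -/
theorem coeff_even_first (r : ℕ) (hr : 2 ≤ r) (l k : ℕ → ℕ)
    (hl1 : Even (l 1)) (hl2 : l 2 = 1)
    (p q : MvPolynomial ℕ ℤ)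
    (hp : intPolyMap p = (∏ j ∈ Finset.Icc 1 r, uvar j) * Pfun K₀ r l uvar)
    (hq : intPolyMap q =
      (∏ j ∈ Finset.Icc 1 (r - 1), uvar j) * Pfun K₀ (r - 1) (fun j => l (j + 1)) uvar) :
    p.coeff (∑ j ∈ Finset.Icc 1 r, Finsupp.single j (k j)) =
      (if l 1 = k 1 then 1 else 0) *
        (q.coeff (∑ j ∈ Finset.Icc 1 (r - 1), Finsupp.single j (k (j + 1)))
          - (if (∀ j ∈ Finset.Icc 2 (r - 1), l (j + 1) = k j) ∧ k r = 1 then 1 else 0)) := by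
  classical
  have hr1 : 1 ≤ r - 1 := by omega
  rw [intPolyMap_eq] at hp hq
  -- Step 1: `q` uses no variable `u_0`.
  have hq0 : ∀ w : ℕ →₀ ℕ, w 0 ≠ 0 → q.coeff w = 0 := by
    have hprodτ : (∏ j ∈ Finset.Icc 1 (r - 1), τh (uvar j))
        = ∏ j ∈ Finset.Icc 1 (r - 1), uvar j :=
      Finset.prod_congr rfl fun j hj => τh_uvar j (by
        simp only [Finset.mem_Icc] at hj; omega)
    have hPfτ : Pfun K₀ (r - 1) (fun j => l (j + 1)) (fun j => τh (uvar j))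
        = Pfun K₀ (r - 1) (fun j => l (j + 1)) uvar :=
      Pfun_congr (r - 1) hr1 _ _ _ (fun j h1 _ => τh_uvar j (by omega))
    have hτ : τh (ipm q) = ipm q := by
      rw [hq, map_mul, map_prod, map_Pfun, hprodτ, hPfτ, ← hq]
    have h2 : scQ (MvPolynomial.map (Int.castRingHom ℚ) q)
        = MvPolynomial.map (Int.castRingHom ℚ) q := by
      apply IsFractionRing.injective A₀ K₀
      rw [← τh_alg]
      exact hτ
    intro w hw
    have h3 := congrArg (MvPolynomial.coeff w) h2
    rw [coeff_scQ] at h3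
    have h5 : MvPolynomial.coeff w (MvPolynomial.map (Int.castRingHom ℚ) q) = 0 := by
      by_contra hne
      have h6 : (1 : ℚ) < 2 ^ w 0 := one_lt_pow₀ one_lt_two hw
      have h7 : ((2 : ℚ) ^ w 0 - 1)
          * MvPolynomial.coeff w (MvPolynomial.map (Int.castRingHom ℚ) q) = 0 := by
        linear_combination h3
      rcases mul_eq_zero.1 h7 with h | h
      · linarith
      · exact hne h
    rw [MvPolynomial.coeff_map] at h5
    have h8 : ((MvPolynomial.coeff w q : ℤ) : ℚ) = 0 := h5
    exact_mod_cast h8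
  -- Step 2: the polynomial identity.
  have hσq : ipm (MvPolynomial.rename Nat.succ q)
      = (∏ j ∈ Finset.Icc 1 (r - 1), uvar (j + 1))
        * Pfun K₀ (r - 1) (fun j => l (j + 1)) (fun j => uvar (j + 1)) := by
    rw [← σh_ipm, hq, map_mul, map_prod, map_Pfun]
    congr 1
    · exact Finset.prod_congr rfl fun j _ => σh_uvar j
    · exact congrArg _ (funext σh_uvar)
  have hMp : ipm ((∏ j ∈ Finset.Icc 2 (r - 1), MvPolynomial.X j ^ l (j + 1))
        * MvPolynomial.X r)
      = (∏ j ∈ Finset.Icc 2 (r - 1), uvar j ^ l (j + 1)) * uvar r := by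
    simp only [map_mul, map_pow, map_prod, ipm_X]
  have hiden : ipm p = ipm ((MvPolynomial.X 1 ^ l 1) * MvPolynomial.rename Nat.succ q
      - (MvPolynomial.X 1 ^ l 1)
        * ((∏ j ∈ Finset.Icc 2 (r - 1), MvPolynomial.X j ^ l (j + 1))
            * MvPolynomial.X r)) := by
    rw [hp, key_mul r hr l hl1 hl2 uvar uvar_ne_zero, mul_sub, map_sub, map_mul, map_mul,
      map_pow, ipm_X, hσq, hMp]
  have hpoly := ipm_inj hiden
  -- Step 3: the subtracted term is a single monomial.
  have hMm : (MvPolynomial.X 1 ^ l 1 : MvPolynomial ℕ ℤ)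
        * ((∏ j ∈ Finset.Icc 2 (r - 1), MvPolynomial.X j ^ l (j + 1)) * MvPolynomial.X r)
      = MvPolynomial.monomial
          (Finsupp.single 1 (l 1)
            + ((∑ j ∈ Finset.Icc 2 (r - 1), Finsupp.single j (l (j + 1)))
                + Finsupp.single r 1)) 1 := by
    rw [prod_X_pow, MvPolynomial.X_pow_eq_monomial,
      show (MvPolynomial.X r : MvPolynomial ℕ ℤ) = MvPolynomial.monomial (Finsupp.single r 1) 1
        from by rw [← MvPolynomial.X_pow_eq_monomial, pow_one],
      MvPolynomial.monomial_mul, MvPolynomial.monomial_mul, one_mul, one_mul]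
  rw [hMm] at hpoly
  -- Values of the exponent finsupps.
  have hdv : ∀ i, (∑ j ∈ Finset.Icc 1 r, Finsupp.single j (k j)) i
      = if i ∈ Finset.Icc 1 r then k i else 0 := sum_single_apply _ _
  have hd1 : (∑ j ∈ Finset.Icc 1 r, Finsupp.single j (k j)) 1 = k 1 := by
    rw [hdv]
    simp only [Finset.mem_Icc]
    rw [if_pos (by omega)]
  have hdM : ∀ i, ((Finsupp.single 1 (l 1)
        + ((∑ j ∈ Finset.Icc 2 (r - 1), Finsupp.single j (l (j + 1)))
            + Finsupp.single r 1) : ℕ →₀ ℕ)) i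
      = (if 1 = i then l 1 else 0)
          + ((if i ∈ Finset.Icc 2 (r - 1) then l (i + 1) else 0)
              + (if r = i then 1 else 0)) := by
    intro i
    rw [Finsupp.add_apply, Finsupp.add_apply, sum_single_apply, Finsupp.single_apply,
      Finsupp.single_apply]
  -- Step 4: extract coefficients.
  rw [hpoly, MvPolynomial.coeff_sub, MvPolynomial.coeff_monomial,
    show (MvPolynomial.X 1 ^ l 1 : MvPolynomial ℕ ℤ)
      = MvPolynomial.monomial (Finsupp.single 1 (l 1)) 1 from MvPolynomial.X_pow_eq_monomial,
    MvPolynomial.coeff_monomial_mul', one_mul]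
  by_cases hcase : l 1 = k 1
  · rw [if_pos hcase, one_mul]
    have hle : Finsupp.single 1 (l 1) ≤ ∑ j ∈ Finset.Icc 1 r, Finsupp.single j (k j) :=
      Finsupp.single_le_iff.mpr (by rw [hd1]; omega)
    rw [if_pos hle]
    have hsum_split : (∑ j ∈ Finset.Icc 1 r, Finsupp.single j (k j))
        = Finsupp.single 1 (l 1) + ∑ j ∈ Finset.Icc 2 r, Finsupp.single j (k j) := by
      rw [show Finset.Icc 1 r = insert 1 (Finset.Icc 2 r) from by
          ext x; simp only [Finset.mem_Icc, Finset.mem_insert]; omega,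
        Finset.sum_insert (by simp), hcase]
    have hmapD : Finsupp.mapDomain Nat.succ
          (∑ j ∈ Finset.Icc 1 (r - 1), Finsupp.single j (k (j + 1)))
        = ∑ j ∈ Finset.Icc 2 r, Finsupp.single j (k j) := by
      rw [Finsupp.mapDomain_finset_sum,
        Finset.sum_congr rfl (fun j _ => Finsupp.mapDomain_single),
        sum_Icc_shift (fun j => Finsupp.single j (k j)) (show (2:ℕ) = 1 + 1 by norm_num)
          (show r = (r - 1) + 1 by omega)]
    have hsub : (∑ j ∈ Finset.Icc 1 r, Finsupp.single j (k j)) - Finsupp.single 1 (l 1)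
        = Finsupp.mapDomain Nat.succ
            (∑ j ∈ Finset.Icc 1 (r - 1), Finsupp.single j (k (j + 1))) := by
      rw [hmapD, hsum_split, add_tsub_cancel_left]
    rw [hsub, MvPolynomial.coeff_rename_mapDomain Nat.succ Nat.succ_injective]
    have hiff : (Finsupp.single 1 (l 1)
          + ((∑ j ∈ Finset.Icc 2 (r - 1), Finsupp.single j (l (j + 1)))
              + Finsupp.single r 1)
        = ∑ j ∈ Finset.Icc 1 r, Finsupp.single j (k j))
        ↔ ((∀ j ∈ Finset.Icc 2 (r - 1), l (j + 1) = k j) ∧ k r = 1) := by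
      constructor
      · intro h
        constructor
        · intro j hj
          have hj' := DFunLike.congr_fun h j
          rw [hdM, hdv] at hj'
          simp only [Finset.mem_Icc] at hj hj'
          split_ifs at hj' <;> omega
        · have hr' := DFunLike.congr_fun h r
          rw [hdM, hdv] at hr'
          simp only [Finset.mem_Icc] at hr'
          split_ifs at hr' <;> omega
      · rintro ⟨h1, h2⟩
        ext i
        rw [hdM, hdv]
        simp only [Finset.mem_Icc]
        by_cases hi1 : i = 1
        · subst hi1
          rw [if_pos rfl, if_neg (by omega), if_neg (by omega), if_pos (by omega)]
          omega
        · by_cases hir : i = r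
          · subst hir
            rw [if_neg (by omega), if_neg (by omega), if_pos rfl, if_pos (by omega)]
            omega
          · by_cases hi2 : 2 ≤ i ∧ i ≤ r - 1
            · have hki := h1 i (Finset.mem_Icc.mpr hi2)
              rw [if_neg (by omega), if_pos hi2, if_neg (by omega), if_pos (by omega)]
              omega
            · rw [if_neg (by omega), if_neg hi2, if_neg (by omega), if_neg (by omega)]
    rw [if_congr hiff rfl rfl]
    congr
  · rw [if_neg hcase, zero_mul]
    have hne : ¬ (Finsupp.single 1 (l 1)
          + ((∑ j ∈ Finset.Icc 2 (r - 1), Finsupp.single j (l (j + 1)))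
              + Finsupp.single r 1)
        = ∑ j ∈ Finset.Icc 1 r, Finsupp.single j (k j)) := by
      intro h
      have h1' := DFunLike.congr_fun h 1
      rw [hdM, hdv] at h1'
      simp only [Finset.mem_Icc] at h1'
      split_ifs at h1' <;> omega
    rw [if_neg hne]
    by_cases hle : l 1 ≤ k 1
    · rw [if_pos (Finsupp.single_le_iff.mpr (by rw [hd1]; omega))]
      have hz : MvPolynomial.coeff
          ((∑ j ∈ Finset.Icc 1 r, Finsupp.single j (k j)) - Finsupp.single 1 (l 1))
          (MvPolynomial.rename Nat.succ q) = 0 := by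
        by_contra hne2
        obtain ⟨w, hw1, hw2⟩ := MvPolynomial.coeff_rename_ne_zero _ _ _ hne2
        apply hw2
        apply hq0 w
        have h01 : w 0 = (((∑ j ∈ Finset.Icc 1 r, Finsupp.single j (k j))
            - Finsupp.single 1 (l 1) : ℕ →₀ ℕ)) 1 := by
          rw [← hw1]
          exact (Finsupp.mapDomain_apply Nat.succ_injective w 0).symm
        rw [Finsupp.tsub_apply, hd1, Finsupp.single_eq_same] at h01
        omega
      rw [hz]
      simp
    · rw [if_neg (fun hcontra => hle (by
        have := Finsupp.single_le_iff.mp hcontra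
        rwa [hd1] at this))]
      simp
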